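/- (Harnack-type inequality for crossing minimizers) Let x, y be two solutions of the variational monotone recurrence relation with strong twist and uniform bound K on second derivatives. Set α_i = max(y_i - x_i, 0), β_i = min(y_i - x_i, 0). Then for every index i with β_i = 0: (Σ_{j=i-r}^{i} + Σ_{j=i}^{i+r})(-β_j) ≤ (K/λ) (Σ_{j=i-r}^{i} + Σ_{j=i}^{i+r}) α_j, and symmetrically for every i with α_i = 0: (Σ_{j=i-r}^{i} + Σ_{j=i}^{i+r}) α_j ≤ (K/λ)(Σ_{j=i-r}^{i} + Σ_{j=i}^{i+r})(-β_j). -/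

import Mathlib

/-! Subtracting the Euler–Lagrange equations of `x` and `y` at a site `i` and linearising each
difference by the mean value theorem gives `∑_{j=1}^r (p_j z_i + b_j z_{i+j} + c_j z_{i-j}) = 0`
for `z = y - x`, where `|p_j| ≤ 2K/r` and, by the twist condition, `-K/r ≤ b_j, c_j ≤ -λ`.
Writing `z = z⁺ - z⁻`, the negative parts of the neighbours thus carry weights at least `λ` and
the positive parts weights at most `K/r`. If `z_i ≥ 0`, this yields
`λ ∑_j (z⁻_{i-j} + z⁻_{i+j}) ≤ K (∑_j (z⁺_{i-j} + z⁺_{i+j}) + 2 z_i)`, which is the first claim;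
the second is the first one with `x` and `y` exchanged. -/

open Finset Filter Topology

noncomputable def d1 (f : ℝ → ℝ → ℝ) (ν μ : ℝ) : ℝ := deriv (fun t => f t μ) ν
noncomputable def d2 (f : ℝ → ℝ → ℝ) (ν μ : ℝ) : ℝ := deriv (fun t => f ν t) μ
noncomputable def d11 (f : ℝ → ℝ → ℝ) (ν μ : ℝ) : ℝ := deriv (fun t => d1 f t μ) ν
noncomputable def d12 (f : ℝ → ℝ → ℝ) (ν μ : ℝ) : ℝ := deriv (fun t => d2 f t μ) ν
noncomputable def d22 (f : ℝ → ℝ → ℝ) (ν μ : ℝ) : ℝ := deriv (fun t => d2 f ν t) μ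

/-- The local energy at site `i` of the sequence `z`:  `S_i(z) = ∑_{j=1}^r f_j(z_i, z_{i+j})`. -/
noncomputable def siteE (r : ℕ) (f : ℕ → ℝ → ℝ → ℝ) (z : ℤ → ℝ) (i : ℤ) : ℝ :=
  ∑ j ∈ Finset.Icc 1 r, f j (z i) (z (i + j))

/-- `W_B` for the segment `B = [a,b] ⊂ ℤ`. -/
noncomputable def Wseg (r : ℕ) (f : ℕ → ℝ → ℝ → ℝ) (a b : ℤ) (z : ℤ → ℝ) : ℝ :=
  ∑ i ∈ Finset.Icc a b, siteE r f z i

/-- A global minimizer: for every segment with interior `[a,b]` and every variation `v`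
supported in `[a,b]`, the energy does not decrease. -/
def IsGlobalMin (r : ℕ) (f : ℕ → ℝ → ℝ → ℝ) (x : ℤ → ℝ) : Prop :=
  ∀ a b : ℤ, ∀ v : ℤ → ℝ, (∀ i, v i ≠ 0 → i ∈ Finset.Icc a b) →
    Wseg r f (a - r) b x ≤ Wseg r f (a - r) b (x + v)

/-- The variational monotone recurrence relation `∑_{j=i-r}^{i} ∂_i S_j(x) = 0` at site `i`. -/
def SolvesEL (r : ℕ) (f : ℕ → ℝ → ℝ → ℝ) (x : ℤ → ℝ) (i : ℤ) : Prop :=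
  (∑ j ∈ Finset.Icc 1 r, (d1 (f j) (x i) (x (i + j)) + d2 (f j) (x (i - j)) (x i))) = 0

/-- A local energy of range `r` in the sense of Definition 1.5 of the paper. -/
structure LocalEnergy (r : ℕ) (K lam : ℝ) where
  f : ℕ → ℝ → ℝ → ℝ
  smooth : ∀ j, ContDiff ℝ 2 (fun p : ℝ × ℝ => f j p.1 p.2)
  periodic : ∀ j ν μ, f j (ν + 1) (μ + 1) = f j ν μ
  bound11 : ∀ j ν μ, |d11 (f j) ν μ| ≤ K / r
  bound12 : ∀ j ν μ, |d12 (f j) ν μ| ≤ K / r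
  bound22 : ∀ j ν μ, |d22 (f j) ν μ| ≤ K / r
  coercive : ∀ j ∈ Finset.Icc 1 r, ∀ C : ℝ, ∃ R : ℝ, ∀ ν μ : ℝ, R ≤ |ν - μ| → C ≤ f j ν μ
  twist : ∀ j ∈ Finset.Icc 1 r, ∀ ν μ : ℝ, d12 (f j) ν μ ≤ -lam

/-- `x` and `y` are weakly ordered on the set `s`. -/
def WOrd (x y : ℤ → ℝ) (s : Set ℤ) : Prop :=
  (∀ i ∈ s, x i ≤ y i) ∨ (∀ i ∈ s, y i ≤ x i)

/-- `D` is an interval outside of which (on both components of the complement)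
`x` and `y` are weakly ordered. -/
def CrossProp (x y : ℤ → ℝ) (D : Set ℤ) : Prop :=
  D.OrdConnected ∧ WOrd x y {i | ∀ j ∈ D, i < j} ∧ WOrd x y {i | ∀ j ∈ D, j < i}

/-- The domain of crossing of `x` and `y`: the minimal interval `D` such that `x` and `y`
are weakly ordered on the connected components of its complement. -/
def IsCrossingDomain (x y : ℤ → ℝ) (D : Set ℤ) : Prop :=
  CrossProp x y D ∧ ∀ D' : Set ℤ, CrossProp x y D' → D ⊆ D'

/-- The translation `(τ_{k,l} x)_i = x_{i-k} + l`. -/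
def transl (k l : ℤ) (x : ℤ → ℝ) : ℤ → ℝ := fun i => x (i - k) + l

/-- The Birkhoff property. -/
def Birkhoff (x : ℤ → ℝ) : Prop :=
  ∀ k l : ℤ, (∀ i, transl k l x i ≤ x i) ∨ (∀ i, x i ≤ transl k l x i)

lemma sum_Icc_sub_natCast {M : Type*} [AddCommMonoid M] (g : ℤ → M) (i : ℤ) (r : ℕ) :
    ∑ k ∈ Icc (i - r) i, g k = g i + ∑ j ∈ Icc 1 r, g (i - j) := by
  rw [Icc_eq_cons_Ico (by omega), sum_cons]
  congr 1
  refine sum_nbij' (fun k => (i - k).toNat) (fun j => i - j) ?_ ?_ ?_ ?_ ?_ <;>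
    intro k <;> simp only [mem_Ico, mem_Icc] <;> grind

lemma sum_Icc_add_natCast {M : Type*} [AddCommMonoid M] (g : ℤ → M) (i : ℤ) (r : ℕ) :
    ∑ k ∈ Icc i (i + r), g k = g i + ∑ j ∈ Icc 1 r, g (i + j) := by
  rw [Icc_eq_cons_Ioc (by omega), sum_cons]
  congr 1
  refine sum_nbij' (fun k => (k - i).toNat) (fun j => i + j) ?_ ?_ ?_ ?_ ?_ <;>
    intro k <;> simp only [mem_Ioc, mem_Icc] <;> grind

lemma exists_hasDerivAt_eq_mul_sub {g g' : ℝ → ℝ} (hg : ∀ t, HasDerivAt g (g' t) t) (a b : ℝ) :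
    ∃ c, g b - g a = g' c * (b - a) := by
  wlog hab : a ≤ b generalizing a b
  · obtain ⟨c, hc⟩ := this b a (le_of_not_ge hab)
    exact ⟨c, by linarith⟩
  rcases hab.eq_or_lt with rfl | hab
  · exact ⟨a, by simp⟩
  obtain ⟨c, -, hc⟩ := exists_hasDerivAt_eq_slope g g' hab
    (fun t _ => (hg t).continuousAt.continuousWithinAt) (fun t _ => hg t)
  exact ⟨c, by rw [hc, div_mul_cancel₀ _ (sub_ne_zero.2 hab.ne')]⟩

section PartialDerivatives

variable {E : Type*} [NormedAddCommGroup E] [NormedSpace ℝ E] {F : ℝ × ℝ → E} {ν μ : ℝ}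

lemma hasDerivAt_comp_mk_left (hF : DifferentiableAt ℝ F (ν, μ)) :
    HasDerivAt (fun t => F (t, μ)) (fderiv ℝ F (ν, μ) (1, 0)) ν :=
  hF.hasFDerivAt.comp_hasDerivAt ν ((hasDerivAt_id ν).prodMk (hasDerivAt_const ν μ))

lemma hasDerivAt_comp_mk_right (hF : DifferentiableAt ℝ F (ν, μ)) :
    HasDerivAt (fun t => F (ν, t)) (fderiv ℝ F (ν, μ) (0, 1)) μ :=
  hF.hasFDerivAt.comp_hasDerivAt μ ((hasDerivAt_const μ ν).prodMk (hasDerivAt_id μ))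

end PartialDerivatives

section SecondPartials

variable {f : ℝ → ℝ → ℝ} {ν μ : ℝ}

lemma d1_eq_fderiv (hf : ContDiff ℝ 2 (Function.uncurry f)) :
    d1 f ν μ = fderiv ℝ (Function.uncurry f) (ν, μ) (1, 0) :=
  (hasDerivAt_comp_mk_left ((hf.differentiable two_ne_zero) _)).deriv

lemma d2_eq_fderiv (hf : ContDiff ℝ 2 (Function.uncurry f)) :
    d2 f ν μ = fderiv ℝ (Function.uncurry f) (ν, μ) (0, 1) :=
  (hasDerivAt_comp_mk_right ((hf.differentiable two_ne_zero) _)).deriv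

lemma hasDerivAt_fderiv_apply_left (hf : ContDiff ℝ 2 (Function.uncurry f)) (c : ℝ × ℝ) :
    HasDerivAt (fun t => fderiv ℝ (Function.uncurry f) (t, μ) c)
      (fderiv ℝ (fderiv ℝ (Function.uncurry f)) (ν, μ) (1, 0) c) ν := by
  have hD := (hf.fderiv_right (m := 1) le_rfl).differentiable one_ne_zero
  simpa using (hasDerivAt_comp_mk_left (hD (ν, μ))).clm_apply (hasDerivAt_const ν c)

lemma hasDerivAt_fderiv_apply_right (hf : ContDiff ℝ 2 (Function.uncurry f)) (c : ℝ × ℝ) :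
    HasDerivAt (fun t => fderiv ℝ (Function.uncurry f) (ν, t) c)
      (fderiv ℝ (fderiv ℝ (Function.uncurry f)) (ν, μ) (0, 1) c) μ := by
  have hD := (hf.fderiv_right (m := 1) le_rfl).differentiable one_ne_zero
  simpa using (hasDerivAt_comp_mk_right (hD (ν, μ))).clm_apply (hasDerivAt_const μ c)

lemma hasDerivAt_d1_left (hf : ContDiff ℝ 2 (Function.uncurry f)) :
    HasDerivAt (fun t => d1 f t μ) (d11 f ν μ) ν := by
  have h := hasDerivAt_fderiv_apply_left (ν := ν) (μ := μ) hf (1, 0)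
  simp only [← d1_eq_fderiv hf] at h
  exact h.differentiableAt.hasDerivAt

lemma hasDerivAt_d2_left (hf : ContDiff ℝ 2 (Function.uncurry f)) :
    HasDerivAt (fun t => d2 f t μ) (d12 f ν μ) ν := by
  have h := hasDerivAt_fderiv_apply_left (ν := ν) (μ := μ) hf (0, 1)
  simp only [← d2_eq_fderiv hf] at h
  exact h.differentiableAt.hasDerivAt

lemma hasDerivAt_d2_right (hf : ContDiff ℝ 2 (Function.uncurry f)) :
    HasDerivAt (fun t => d2 f ν t) (d22 f ν μ) μ := by
  have h := hasDerivAt_fderiv_apply_right (ν := ν) (μ := μ) hf (0, 1)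
  simp only [← d2_eq_fderiv hf] at h
  exact h.differentiableAt.hasDerivAt

lemma hasDerivAt_d1_right (hf : ContDiff ℝ 2 (Function.uncurry f)) :
    HasDerivAt (fun t => d1 f ν t) (d12 f ν μ) μ := by
  have h := hasDerivAt_fderiv_apply_right (ν := ν) (μ := μ) hf (1, 0)
  have h12 := (hasDerivAt_fderiv_apply_left (ν := ν) (μ := μ) hf (0, 1)).deriv
  rw [hf.contDiffAt.isSymmSndFDerivAt (by simp) (0, 1) (1, 0), ← h12] at h
  simp only [← d1_eq_fderiv hf, ← d2_eq_fderiv hf] at h ⊢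
  exact h

lemma exists_d1_sub_eq (hf : ContDiff ℝ 2 (Function.uncurry f)) (a₁ a₂ b₁ b₂ : ℝ) :
    ∃ p q : ℝ × ℝ, d1 f b₁ b₂ - d1 f a₁ a₂ =
      d11 f p.1 p.2 * (b₁ - a₁) + d12 f q.1 q.2 * (b₂ - a₂) := by
  obtain ⟨c, hc⟩ := exists_hasDerivAt_eq_mul_sub (fun t => hasDerivAt_d1_left hf) a₁ b₁
  obtain ⟨c', hc'⟩ := exists_hasDerivAt_eq_mul_sub (fun t => hasDerivAt_d1_right hf) a₂ b₂
  exact ⟨(c, b₂), (a₁, c'), by linarith⟩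

lemma exists_d2_sub_eq (hf : ContDiff ℝ 2 (Function.uncurry f)) (a₁ a₂ b₁ b₂ : ℝ) :
    ∃ p q : ℝ × ℝ, d2 f b₁ b₂ - d2 f a₁ a₂ =
      d12 f p.1 p.2 * (b₁ - a₁) + d22 f q.1 q.2 * (b₂ - a₂) := by
  obtain ⟨c, hc⟩ := exists_hasDerivAt_eq_mul_sub (fun t => hasDerivAt_d2_left hf) a₁ b₁
  obtain ⟨c', hc'⟩ := exists_hasDerivAt_eq_mul_sub (fun t => hasDerivAt_d2_right hf) a₂ b₂
  exact ⟨(c, b₂), (a₁, c'), by linarith⟩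

end SecondPartials

noncomputable def eulerLagrangeSummand (f : ℕ → ℝ → ℝ → ℝ) (z : ℤ → ℝ) (i : ℤ) (j : ℕ) : ℝ :=
  d1 (f j) (z i) (z (i + j)) + d2 (f j) (z (i - j)) (z i)

lemma solvesEL_iff {r : ℕ} {f : ℕ → ℝ → ℝ → ℝ} {z : ℤ → ℝ} {i : ℤ} :
    SolvesEL r f z i ↔ ∑ j ∈ Icc 1 r, eulerLagrangeSummand f z i j = 0 :=
  Iff.rfl

lemma mul_max_sub_le_of_twist {lam κ b u v : ℝ} (h₁ : lam ≤ -b) (h₂ : -b ≤ κ) :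
    lam * max (u - v) 0 ≤ b * (v - u) + κ * max (v - u) 0 := by
  rcases le_total u v with huv | huv
  · rw [max_eq_right (by linarith), max_eq_left (by linarith)]
    nlinarith
  · rw [max_eq_left (by linarith), max_eq_right (by linarith)]
    nlinarith

namespace LocalEnergy

variable {r : ℕ} {K lam : ℝ} (E : LocalEnergy r K lam)

lemma exists_eulerLagrangeSummand_sub_eq (x y : ℤ → ℝ) (i : ℤ) {j : ℕ} (hj : j ∈ Icc 1 r) :
    ∃ p b c : ℝ, |p| ≤ 2 * (K / r) ∧ lam ≤ -b ∧ -b ≤ K / r ∧ lam ≤ -c ∧ -c ≤ K / r ∧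
      eulerLagrangeSummand E.f y i j - eulerLagrangeSummand E.f x i j =
        p * (y i - x i) + b * (y (i + j) - x (i + j)) + c * (y (i - j) - x (i - j)) := by
  obtain ⟨p, q, hpq⟩ := exists_d1_sub_eq (E.smooth j) (x i) (x (i + j)) (y i) (y (i + j))
  obtain ⟨p', q', hpq'⟩ := exists_d2_sub_eq (E.smooth j) (x (i - j)) (x i) (y (i - j)) (y i)
  have hp : |d11 (E.f j) p.1 p.2 + d22 (E.f j) q'.1 q'.2| ≤ 2 * (K / r) :=
    (abs_add_le _ _).trans (by linarith [E.bound11 j p.1 p.2, E.bound22 j q'.1 q'.2])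
  refine ⟨_, d12 (E.f j) q.1 q.2, d12 (E.f j) p'.1 p'.2, hp, by linarith [E.twist j hj q.1 q.2],
    neg_le.1 (abs_le.1 (E.bound12 j q.1 q.2)).1, by linarith [E.twist j hj p'.1 p'.2],
    neg_le.1 (abs_le.1 (E.bound12 j p'.1 p'.2)).1, ?_⟩
  simp only [eulerLagrangeSummand]
  linarith

variable {x y : ℤ → ℝ} {i : ℤ}

lemma lam_mul_sum_max_sub_le (hr : 1 ≤ r) (hK : 0 < K) (hx : SolvesEL r E.f x i)
    (hy : SolvesEL r E.f y i) (hi : x i ≤ y i) :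
    lam * ∑ j ∈ Icc 1 r, (max (x (i - j) - y (i - j)) 0 + max (x (i + j) - y (i + j)) 0) ≤
      K * (∑ j ∈ Icc 1 r, (max (y (i - j) - x (i - j)) 0 + max (y (i + j) - x (i + j)) 0) +
        2 * (y i - x i)) := by
  have hterm : ∀ j ∈ Icc 1 r,
      lam * (max (x (i - j) - y (i - j)) 0 + max (x (i + j) - y (i + j)) 0) ≤
        (eulerLagrangeSummand E.f y i j - eulerLagrangeSummand E.f x i j) +
          K / r * ((max (y (i - j) - x (i - j)) 0 + max (y (i + j) - x (i + j)) 0) +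
            2 * (y i - x i)) := by
    intro j hj
    obtain ⟨p, b, c, hp, hb, hb', hc, hc', hsub⟩ := E.exists_eulerLagrangeSummand_sub_eq x y i hj
    have h₁ := mul_max_sub_le_of_twist (u := x (i + j)) (v := y (i + j)) hb hb'
    have h₂ := mul_max_sub_le_of_twist (u := x (i - j)) (v := y (i - j)) hc hc'
    have h₃ : -p * (y i - x i) ≤ 2 * (K / r) * (y i - x i) :=
      mul_le_mul_of_nonneg_right (neg_le.1 (abs_le.1 hp).1) (sub_nonneg.2 hi)
    rw [hsub]
    linarith
  have hr₀ : (r : ℝ) ≠ 0 := Nat.cast_ne_zero.2 (by omega)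
  calc _ = ∑ j ∈ Icc 1 r,
        lam * (max (x (i - j) - y (i - j)) 0 + max (x (i + j) - y (i + j)) 0) := mul_sum _ _ _
    _ ≤ _ := sum_le_sum hterm
    _ = K / r * ∑ j ∈ Icc 1 r, (max (y (i - j) - x (i - j)) 0 + max (y (i + j) - x (i + j)) 0) +
          K * (2 * (y i - x i)) := by
      rw [sum_add_distrib, sum_sub_distrib, solvesEL_iff.1 hy, solvesEL_iff.1 hx, ← mul_sum,
        sum_add_distrib, sum_const, Nat.card_Icc, Nat.add_sub_cancel, nsmul_eq_mul]
      field_simp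
      ring
    _ ≤ _ := by
      rw [mul_add]
      gcongr
      exact div_le_self hK.le (by exact_mod_cast hr)

theorem sum_max_sub_le_of_le (hr : 1 ≤ r) (hK : 0 < K) (hlam : 0 < lam)
    (hx : SolvesEL r E.f x i) (hy : SolvesEL r E.f y i) (hi : x i ≤ y i) :
    (∑ j ∈ Icc (i - r) i, max (x j - y j) 0) + ∑ j ∈ Icc i (i + r), max (x j - y j) 0 ≤
      K / lam * ((∑ j ∈ Icc (i - r) i, max (y j - x j) 0) +
        ∑ j ∈ Icc i (i + r), max (y j - x j) 0) := by
  have h := E.lam_mul_sum_max_sub_le hr hK hx hy hi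
  simp only [sum_add_distrib] at h
  simp only [sum_Icc_sub_natCast, sum_Icc_add_natCast, max_eq_right (sub_nonpos.2 hi),
    max_eq_left (sub_nonneg.2 hi)]
  rw [div_mul_eq_mul_div, le_div_iff₀ hlam]
  linarith

end LocalEnergy

/-- Harnack-type inequality for crossing solutions:  with `α_i = max(y_i - x_i, 0)` and
`β_i = min(y_i - x_i, 0)`, at every site where `β` (resp. `α`) vanishes, the local sum of
`-β` (resp. `α`) is controlled by `K/λ` times the local sum of `α` (resp. `-β`). -/
theorem stmt8 (r : ℕ) (hr : 1 ≤ r) (K lam : ℝ) (hK : 0 < K) (hlam : 0 < lam)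
    (E : LocalEnergy r K lam) (x y : ℤ → ℝ)
    (hELx : ∀ i : ℤ, SolvesEL r E.f x i) (hELy : ∀ i : ℤ, SolvesEL r E.f y i)
    (α β : ℤ → ℝ)
    (hα : ∀ i, α i = max (y i - x i) 0) (hβ : ∀ i, β i = min (y i - x i) 0) :
    (∀ i : ℤ, β i = 0 →
      (∑ j ∈ Finset.Icc (i - r) i, (-β j)) + ∑ j ∈ Finset.Icc i (i + r), (-β j) ≤
        K / lam * ((∑ j ∈ Finset.Icc (i - r) i, α j) + ∑ j ∈ Finset.Icc i (i + r), α j)) ∧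
    (∀ i : ℤ, α i = 0 →
      (∑ j ∈ Finset.Icc (i - r) i, α j) + ∑ j ∈ Finset.Icc i (i + r), α j ≤
        K / lam * ((∑ j ∈ Finset.Icc (i - r) i, (-β j)) +
          ∑ j ∈ Finset.Icc i (i + r), (-β j))) := by
  simp only [hα, hβ, ← max_neg_neg, neg_sub, neg_zero]
  refine ⟨fun i hi => ?_, fun i hi => ?_⟩
  · have hxy : x i ≤ y i := sub_nonneg.1 (min_eq_right_iff.1 hi)
    exact E.sum_max_sub_le_of_le hr hK hlam (hELx i) (hELy i) hxy
  · have hyx : y i ≤ x i := sub_nonpos.1 (max_eq_right_iff.1 hi)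
    exact E.sum_max_sub_le_of_le hr hK hlam (hELy i) (hELx i) hyx
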